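/- Let (X,d) be a metric space with marked point a. If every two normalizing sequences are equivalent at a, then a is an isolated point of X. -/

import Mathlib

open Filter Topology

/-- A normalizing sequence: positive reals tending to 0. -/
def Normalizing (r : ℕ → ℝ) : Prop :=
  (∀ n, 0 < r n) ∧ Tendsto r atTop (nhds 0)

/-- Two sequences in `X` are mutually stable w.r.t. `r`:
the limit of `dist (x n) (y n) / r n` exists and is finite. -/
def MutuallyStable {X : Type*} [MetricSpace X] (r : ℕ → ℝ) (x y : ℕ → X) : Prop :=
  ∃ L : ℝ, Tendsto (fun n => dist (x n) (y n) / r n) atTop (nhds L)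

/-- The normalized limit distance `d̃`. -/
noncomputable def dtilde {X : Type*} [MetricSpace X] (r : ℕ → ℝ) (x y : ℕ → X) : ℝ :=
  limUnder atTop (fun n => dist (x n) (y n) / r n)

/-- A family is self-stable if every two members are mutually stable. -/
def SelfStable {X : Type*} [MetricSpace X] (r : ℕ → ℝ) (F : Set (ℕ → X)) : Prop :=
  ∀ x ∈ F, ∀ y ∈ F, MutuallyStable r x y

/-- A family is maximal self-stable if it is self-stable and maximal with that property. -/
def MaximalSelfStable {X : Type*} [MetricSpace X] (r : ℕ → ℝ) (F : Set (ℕ → X)) : Prop :=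
  SelfStable r F ∧ ∀ G, SelfStable r G → F ⊆ G → G = F

/-- Two normalizing sequences are equivalent at `a`. -/
def EquivAt {X : Type*} [MetricSpace X] (a : X) (r t : ℕ → ℝ) : Prop :=
  ∀ F : Set (ℕ → X), (fun _ => a) ∈ F → (SelfStable r F ↔ SelfStable t F)

/-- A normalizing sequence is confluented at `a`: every sequence mutually stable with
the constant sequence `ã` has normalized distance 0 to it. -/
def Confluented {X : Type*} [MetricSpace X] (a : X) (r : ℕ → ℝ) : Prop :=
  ∀ x : ℕ → X, MutuallyStable r x (fun _ => a) →
    Tendsto (fun n => dist (x n) a / r n) atTop (nhds 0)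

/-!
If `a` is not isolated, pick `x n → a` with `x n ≠ a` and put `r n = d(x n, a)`. The family
`{ã, x}` is self-stable with respect to `r`, the ratio `d(x n, a) / r n` being constantly `1`,
but not with respect to the normalizing sequence `r n * r n`, for which that ratio is `1 / r n → ∞`.
-/

theorem normalizing_dist {X : Type*} [MetricSpace X] {x : ℕ → X} {a : X}
    (hne : ∀ n, x n ≠ a) (hlim : Tendsto x atTop (𝓝 a)) :
    Normalizing (fun n => dist (x n) a) :=
  ⟨fun n => dist_pos.2 (hne n), tendsto_iff_dist_tendsto_zero.1 hlim⟩

theorem Normalizing.mul {r t : ℕ → ℝ} (hr : Normalizing r) (ht : Normalizing t) :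
    Normalizing (fun n => r n * t n) :=
  ⟨fun n => mul_pos (hr.1 n) (ht.1 n), by simpa using hr.2.mul ht.2⟩

section Stability

variable {X : Type*} [MetricSpace X] {r : ℕ → ℝ} {x y : ℕ → X}

theorem mutuallyStable_self (r : ℕ → ℝ) (x : ℕ → X) : MutuallyStable r x x :=
  ⟨0, by simp⟩

theorem MutuallyStable.symm (h : MutuallyStable r x y) : MutuallyStable r y x := by
  simpa only [MutuallyStable, dist_comm] using h

theorem selfStable_pair_iff : SelfStable r {x, y} ↔ MutuallyStable r x y := by
  refine ⟨fun h => h x (by simp) y (by simp), fun h => ?_⟩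
  rintro u (rfl | rfl) v (rfl | rfl)
  exacts [mutuallyStable_self r _, h, h.symm, mutuallyStable_self r _]

theorem mutuallyStable_of_dist_eq (hr : ∀ n, r n ≠ 0) (hdist : ∀ n, dist (x n) (y n) = r n) :
    MutuallyStable r x y :=
  ⟨1, by simp [hdist, hr]⟩

theorem not_mutuallyStable_mul_self_of_dist_eq (hr : Normalizing r)
    (hdist : ∀ n, dist (x n) (y n) = r n) :
    ¬ MutuallyStable (fun n => r n * r n) x y := by
  rintro ⟨L, hL⟩
  have hratio : (fun n => dist (x n) (y n) / (r n * r n)) = r⁻¹ := by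
    ext n
    rw [hdist, Pi.inv_apply, div_mul_cancel_left₀ (hr.1 n).ne']
  have hpos : Tendsto r atTop (𝓝[>] 0) :=
    tendsto_nhdsWithin_iff.2 ⟨hr.2, Eventually.of_forall hr.1⟩
  rw [hratio] at hL
  exact not_tendsto_nhds_of_tendsto_atTop hpos.inv_tendsto_nhdsGT_zero L hL

end Stability

/-- If every two normalizing sequences are equivalent at `a`, then `a` is isolated. -/
theorem stmt_9 {X : Type*} [MetricSpace X] (a : X)
    (h : ∀ r t : ℕ → ℝ, Normalizing r → Normalizing t → EquivAt a r t) :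
    ∃ ε > (0 : ℝ), ∀ x : X, dist x a < ε → x = a := by
  by_contra hiso
  have ha : a ∈ closure {a}ᶜ := by
    push Not at hiso
    refine Metric.mem_closure_iff.2 fun ε hε => ?_
    obtain ⟨b, hdist, hne⟩ := hiso ε hε
    exact ⟨b, hne, by rwa [dist_comm]⟩
  obtain ⟨x, hne, hlim⟩ := mem_closure_iff_seq_limit.1 ha
  set r : ℕ → ℝ := fun n => dist (x n) a
  have hr : Normalizing r := normalizing_dist hne hlim
  have hstable : SelfStable r {x, fun _ => a} :=
    selfStable_pair_iff.2 (mutuallyStable_of_dist_eq (fun n => (hr.1 n).ne') fun _ => rfl)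
  have hequiv := h r _ hr (hr.mul hr) {x, fun _ => a} (by simp)
  exact not_mutuallyStable_mul_self_of_dist_eq hr (fun _ => rfl)
    (selfStable_pair_iff.1 (hequiv.1 hstable))
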